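/- (Theorem 5: H counts positive paths.) For every finitely supported function m : {1,2,…} → ℕ, the set of positive paths with up-step content m (with any number of down steps) is finite, and the coefficient of the monomial ∏_{i≥1} t_i^{m(i)} in H equals the cardinality of this set. -/

import Mathlib

/- `R = MvPowerSeries ℕ ℚ`, with the product (coefficientwise) topology. -/
noncomputable instance : TopologicalSpace (MvPowerSeries ℕ ℚ) :=
  inferInstanceAs (TopologicalSpace ((ℕ →₀ ℕ) → ℚ))

open MvPowerSeries

/-- A path is a finite list of integers all of whose entries are ≥ -1; entries ≥ 0 are
up steps and the entry -1 is the down step. -/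
def IsPath (P : List ℤ) : Prop := ∀ s ∈ P, (-1 : ℤ) ≤ s

/-- A nonnegative path: a path all of whose prefix sums are ≥ 0. -/
def NonnegPath (P : List ℤ) : Prop := IsPath P ∧ ∀ i : ℕ, 0 ≤ (P.take i).sum

/-- A positive path: a path all of whose nonempty prefix sums are > 0. -/
def PositivePath (P : List ℤ) : Prop :=
  IsPath P ∧ ∀ i : ℕ, 1 ≤ i → i ≤ P.length → 0 < (P.take i).sum

/-- An excursion: a nonnegative path with total sum 0. -/
def Excursion (P : List ℤ) : Prop := NonnegPath P ∧ P.sum = 0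

/-- The path `P` has up-step content `m` if for every `i ≥ 1` it has exactly `m i`
steps equal to `i - 1`. -/
def HasContent (m : ℕ →₀ ℕ) (P : List ℤ) : Prop :=
  ∀ i : ℕ, 1 ≤ i → P.count ((i : ℤ) - 1) = m i

/-!
`S`, `G` and `H` are the generating series, by up-step content, of excursions (nonnegative paths
ending at height `0`), of nonnegative paths and of positive paths. Removing the first step
`i - 1` of a nonempty excursion leaves a path descending to `-(i - 1)`, which splits at its first
visits to `-1, -2, …` into `i` excursions separated by down steps: this is the Łukasiewicz
equation, and it has only one solution. Cutting a nonempty excursion after its last up step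
leaves a nonnegative path, one up step and the forced run of down steps, so
`S - 1 = G · S₁`. Cutting a nonnegative path at its last visit to `0` leaves an excursion
followed by a positive path, so `G = S · H`. Since `S₁ ≠ 0` and `S ≠ 0`, these identities
determine `G` and `H`.
-/

open Finsupp

lemma List.sum_take_append {M : Type*} [AddMonoid M] (A B : List M) (i : ℕ) :
    ((A ++ B).take i).sum = (A.take i).sum + (B.take (i - A.length)).sum := by
  rw [List.take_append, List.sum_append]

lemma List.exists_eq_replicate_append_cons {α : Type*} {a : α} {W : List α}
    (h : ∃ b ∈ W, b ≠ a) : ∃ k b C, b ≠ a ∧ W = List.replicate k a ++ b :: C := by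
  induction W with
  | nil => simp at h
  | cons x W ih =>
    by_cases hx : x = a
    · obtain ⟨k, b, C, hb, rfl⟩ := ih (by simpa [hx] using h)
      exact ⟨k + 1, b, C, hb, by simp [hx, List.replicate_succ]⟩
    · exact ⟨0, x, W, hx, rfl⟩

lemma List.replicate_append_cons_inj {α : Type*} {a b b' : α} {k k' : ℕ} {C C' : List α}
    (hb : b ≠ a) (hb' : b' ≠ a)
    (h : List.replicate k a ++ b :: C = List.replicate k' a ++ b' :: C') :
    k = k' ∧ b = b' ∧ C = C' := by
  induction k generalizing k' with
  | zero => cases k' <;> simp_all [List.replicate_succ, eq_comm]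
  | succ k ih => cases k' <;> simp_all [List.replicate_succ]

lemma Set.Finite.lists_length_le {α : Type*} {s : Set α} (hs : s.Finite) (L : ℕ) :
    {W : List α | W.length ≤ L ∧ ∀ x ∈ W, x ∈ s}.Finite := by
  have := hs.to_subtype
  refine ((List.finite_length_le s L).image (List.map Subtype.val)).subset ?_
  rintro W ⟨hlen, hmem⟩
  lift W to List s using hmem
  exact ⟨W, by simpa using hlen, rfl⟩

lemma MvPowerSeries.coeff_pow_eq_of_coeff_eq {σ R : Type*} [CommSemiring R]
    {A B : MvPowerSeries σ R} {m : σ →₀ ℕ} (h : ∀ μ ≤ m, coeff μ A = coeff μ B)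
    (k : ℕ) : ∀ μ ≤ m, coeff μ (A ^ k) = coeff μ (B ^ k) := by
  classical
  induction k with
  | zero => exact fun _ _ => rfl
  | succ k ih =>
    intro μ hμ
    rw [pow_succ, pow_succ, coeff_mul, coeff_mul]
    refine Finset.sum_congr rfl fun p hp => ?_
    rw [Finset.HasAntidiagonal.mem_antidiagonal] at hp
    rw [ih p.1 ((hp ▸ le_self_add).trans hμ), h p.2 ((hp ▸ le_add_self).trans hμ)]

/-! ### Up-step content -/

noncomputable def upContent (W : List ℤ) : ℕ →₀ ℕ :=
  ((W.filter (0 ≤ ·)).map fun s => single (s.toNat + 1) 1).sum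

@[simp] lemma upContent_nil : upContent [] = 0 := rfl

lemma upContent_cons (s : ℤ) (W : List ℤ) :
    upContent (s :: W) = (if 0 ≤ s then single (s.toNat + 1) 1 else 0) + upContent W := by
  by_cases h : 0 ≤ s <;> simp [upContent, h]

@[simp] lemma upContent_append (A B : List ℤ) :
    upContent (A ++ B) = upContent A + upContent B := by
  simp [upContent]

lemma upContent_apply {W : List ℤ} {i : ℕ} (hi : 1 ≤ i) :
    upContent W i = W.count ((i : ℤ) - 1) := by
  induction W with
  | nil => simp
  | cons s W ih =>
    simp only [upContent_cons, List.count_cons, beq_iff_eq, Finsupp.add_apply, ih]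
    split_ifs <;> simp only [single_apply, coe_zero, Pi.zero_apply] <;> (try split_ifs) <;> omega

@[simp] lemma upContent_apply_zero (W : List ℤ) : upContent W 0 = 0 := by
  induction W with
  | nil => simp
  | cons s W ih =>
    rw [upContent_cons]
    split_ifs <;> simp [ih]

lemma hasContent_iff_upContent_eq {m : ℕ →₀ ℕ} (hm : m 0 = 0) (W : List ℤ) :
    HasContent m W ↔ upContent W = m := by
  refine ⟨fun h => ext fun i => ?_, fun h i hi => h ▸ (upContent_apply hi).symm⟩
  rcases Nat.eq_zero_or_pos i with rfl | hi
  · simp [hm]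
  · rw [upContent_apply hi, h i hi]

lemma isPath_cons {s : ℤ} {W : List ℤ} : IsPath (s :: W) ↔ -1 ≤ s ∧ IsPath W :=
  List.forall_mem_cons

lemma isPath_append {A B : List ℤ} : IsPath (A ++ B) ↔ IsPath A ∧ IsPath B :=
  List.forall_mem_append

/-- Each step contributes `1 + s` to the left side: its index in the content if it is an up
step, nothing if it is the down step. -/
lemma IsPath.length_add_sum {W : List ℤ} (h : IsPath W) :
    (W.length : ℤ) + W.sum = weight id (upContent W) := by
  induction W with
  | nil => simp
  | cons s W ih =>
    obtain ⟨hs, hW⟩ := isPath_cons.mp h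
    have := ih hW
    rw [upContent_cons, map_add]
    split_ifs with h0
    · simp [weight_single]; omega
    · simp; omega

lemma finite_paths_of_neg_le_sum (n : ℤ) (m : ℕ →₀ ℕ) :
    {W : List ℤ | IsPath W ∧ -n ≤ W.sum ∧ upContent W = m}.Finite := by
  have hsteps : (insert (-1) ((fun i : ℕ => (i : ℤ) - 1) '' m.support) : Set ℤ).Finite :=
    (m.support.finite_toSet.image _).insert _
  refine (hsteps.lists_length_le (weight id m + n).toNat).subset ?_
  rintro W ⟨hW, hsum, rfl⟩
  refine ⟨by have := hW.length_add_sum; omega, fun x hx => ?_⟩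
  rcases (hW x hx).eq_or_lt with h | h
  · exact .inl h.symm
  · refine .inr ⟨x.toNat + 1, ?_, by simp; omega⟩
    rw [Finset.mem_coe, mem_support_iff, upContent_apply (by omega)]
    exact (List.count_pos_iff.mpr (by convert hx using 1; omega)).ne'

/-! ### Cutting paths -/

def Descent (n : ℕ) (W : List ℤ) : Prop :=
  IsPath W ∧ (∀ i : ℕ, -(n : ℤ) ≤ (W.take i).sum) ∧ W.sum = -n

lemma descent_nil : Descent 0 [] := ⟨List.forall_mem_nil _, by simp, rfl⟩

lemma descent_zero_cons_iff {s : ℤ} {B : List ℤ} :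
    Descent 0 (s :: B) ↔ 0 ≤ s ∧ Descent s.toNat B := by
  constructor
  · rintro ⟨hpath, hpre, hsum⟩
    have hs : 0 ≤ s := by simpa using hpre 1
    refine ⟨hs, (isPath_cons.mp hpath).2, fun i => ?_, ?_⟩
    · have := hpre (i + 1)
      simp only [List.take_succ_cons, List.sum_cons] at this
      omega
    · simp only [List.sum_cons] at hsum
      omega
  · rintro ⟨hs, hpath, hpre, hsum⟩
    refine ⟨isPath_cons.mpr ⟨by omega, hpath⟩, fun i => ?_,
      by simp only [List.sum_cons]; omega⟩
    cases i with
    | zero => simp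
    | succ i => have := hpre i; simp only [List.take_succ_cons, List.sum_cons]; omega

lemma Descent.append_down_append {n : ℕ} {A B : List ℤ} (hA : Descent 0 A) (hB : Descent n B) :
    Descent (n + 1) (A ++ -1 :: B) := by
  obtain ⟨hApath, hApre, hAsum⟩ := hA
  obtain ⟨hBpath, hBpre, hBsum⟩ := hB
  refine ⟨isPath_append.mpr ⟨hApath, isPath_cons.mpr ⟨le_rfl, hBpath⟩⟩, fun i => ?_, ?_⟩
  · rw [List.sum_take_append]
    rcases Nat.lt_or_ge A.length i with hi | hi
    · obtain ⟨k, hk⟩ : ∃ k, i - A.length = k + 1 := ⟨i - A.length - 1, by omega⟩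
      have := hBpre k
      rw [List.take_of_length_le hi.le, hAsum, hk, List.take_succ_cons, List.sum_cons]
      push_cast
      omega
    · have := hApre i
      rw [Nat.sub_eq_zero_of_le hi]
      simp only [List.take_zero, List.sum_nil]
      push_cast at this ⊢
      omega
  · simp only [List.sum_append, List.sum_cons, hAsum, hBsum]
    push_cast
    ring

/-- Cutting at the first time the path goes below `0`. -/
lemma Descent.exists_append_down_append {n : ℕ} {W : List ℤ} (h : Descent (n + 1) W) :
    ∃ A B, Descent 0 A ∧ Descent n B ∧ A ++ -1 :: B = W := by
  classical
  obtain ⟨hpath, hpre, hsum⟩ := h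
  have hex : ∃ i, (W.take i).sum < 0 := ⟨W.length, by rw [List.take_length, hsum]; omega⟩
  obtain ⟨j, hj⟩ : ∃ j, Nat.find hex = j + 1 :=
    Nat.exists_eq_add_one_of_ne_zero fun h0 => by simpa [h0] using Nat.find_spec hex
  have hneg : (W.take (j + 1)).sum < 0 := hj ▸ Nat.find_spec hex
  have hmin : ∀ i ≤ j, 0 ≤ (W.take i).sum := fun i hi =>
    not_lt.mp (Nat.find_min hex (by omega))
  have hjlt : j < W.length := by
    by_contra! hle
    rw [List.take_of_length_le (by omega)] at hneg
    have := hmin W.length hle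
    rw [List.take_length] at this
    omega
  have hstep : (W.take (j + 1)).sum = (W.take j).sum + W[j] := by
    rw [List.take_add_one, List.getElem?_eq_getElem hjlt, Option.toList_some, List.sum_append,
      List.sum_singleton]
  have hWj : W[j] = -1 ∧ (W.take j).sum = 0 := by
    have := hpath _ (List.getElem_mem hjlt)
    have := hmin j le_rfl
    omega
  have hsplit : W.take (j + 1) ++ W.drop (j + 1) = W := List.take_append_drop _ _
  refine ⟨W.take j, W.drop (j + 1), ⟨fun x hx => hpath x (List.mem_of_mem_take hx),
    fun i => ?_, by simpa using hWj.2⟩, ⟨fun x hx => hpath x (List.mem_of_mem_drop hx),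
    fun k => ?_, ?_⟩, ?_⟩
  · rw [List.take_take]
    simpa using hmin _ (min_le_right i j)
  · have := hpre (j + 1 + k)
    rw [List.take_add, List.sum_append] at this
    omega
  · rw [← hsplit, List.sum_append] at hsum
    omega
  · conv_rhs => rw [← List.take_append_drop j W, List.drop_eq_getElem_cons hjlt, hWj.1]

lemma Descent.append_down_append_inj {A A' B B' : List ℤ} (hA : Descent 0 A) (hA' : Descent 0 A')
    (h : A ++ -1 :: B = A' ++ -1 :: B') : A = A' ∧ B = B' := by
  have key : ∀ {X X' Y Y' : List ℤ}, Descent 0 X → Descent 0 X' →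
      X ++ -1 :: Y = X' ++ -1 :: Y' → ¬ X.length < X'.length := by
    intro X X' Y Y' hX hX' hXY hlt
    have hleft : ((X ++ -1 :: Y).take (X.length + 1)).sum = -1 := by
      simp [hX.2.2]
    rw [hXY, List.take_append_of_le_length (by omega : X.length + 1 ≤ X'.length)] at hleft
    have := hX'.2.1 (X.length + 1)
    omega
  have hlen : A.length = A'.length := by
    by_contra hne
    rcases Nat.lt_or_gt_of_ne hne with hlt | hlt
    · exact key hA hA' h hlt
    · exact key hA' hA h.symm hlt
  obtain ⟨rfl, hB⟩ := List.append_inj h hlen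
  exact ⟨rfl, List.cons_injective hB⟩

lemma NonnegPath.sum_nonneg {W : List ℤ} (h : NonnegPath W) : 0 ≤ W.sum := by
  simpa using h.2 W.length

lemma Descent.nonnegPath {W : List ℤ} (h : Descent 0 W) : NonnegPath W :=
  ⟨h.1, by simpa using h.2.1⟩

lemma PositivePath.nonnegPath {P : List ℤ} (h : PositivePath P) : NonnegPath P := by
  refine ⟨h.1, fun k => ?_⟩
  rcases le_or_gt k P.length with hk | hk
  · rcases k.eq_zero_or_pos with rfl | hk0
    · simp
    · exact (h.2 k hk0 hk).le
  · rw [List.take_of_length_le hk.le]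
    rcases P.length.eq_zero_or_pos with h0 | h0
    · simp [List.length_eq_zero_iff.mp h0]
    · simpa using (h.2 _ h0 le_rfl).le

lemma NonnegPath.append {A B : List ℤ} (hA : NonnegPath A) (hB : NonnegPath B) :
    NonnegPath (A ++ B) := by
  refine ⟨isPath_append.mpr ⟨hA.1, hB.1⟩, fun i => ?_⟩
  have := hA.2 i
  have := hB.2 (i - A.length)
  rw [List.sum_take_append]
  omega

lemma NonnegPath.left_of_append {A B : List ℤ} (h : NonnegPath (A ++ B)) : NonnegPath A :=
  ⟨(isPath_append.mp h.1).1, fun i => by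
    rw [List.take_eq_take_min, ← List.take_append_of_le_length (min_le_right _ _)]
    exact h.2 _⟩

/-- Cutting at the last time the path is at `0`. -/
lemma NonnegPath.exists_descent_append_positive {W : List ℤ} (h : NonnegPath W) :
    ∃ E P, Descent 0 E ∧ PositivePath P ∧ E ++ P = W := by
  classical
  set j := Nat.findGreatest (fun i => (W.take i).sum = 0) W.length
  have hj : (W.take j).sum = 0 := Nat.findGreatest_spec (P := fun i => (W.take i).sum = 0) (m := 0)
    (Nat.zero_le _) (by simp)
  refine ⟨W.take j, W.drop j,
    ⟨fun x hx => h.1 x (List.mem_of_mem_take hx), fun i => ?_, by simp [hj]⟩,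
    ⟨fun x hx => h.1 x (List.mem_of_mem_drop hx), fun k hk1 hk2 => ?_⟩,
    List.take_append_drop j W⟩
  · rw [List.take_take]
    simpa using h.2 (min i j)
  · have hnn := h.2 (j + k)
    have hne : (W.take (j + k)).sum ≠ 0 :=
      Nat.findGreatest_is_greatest (P := fun i => (W.take i).sum = 0) (n := W.length)
        (by omega) (by rw [List.length_drop] at hk2; omega)
    rw [List.take_add, List.sum_append, hj] at hnn hne
    omega

lemma descent_append_positive_inj {E E' P P' : List ℤ} (hE : Descent 0 E) (hE' : Descent 0 E')
    (hP : PositivePath P) (hP' : PositivePath P') (h : E ++ P = E' ++ P') :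
    E = E' ∧ P = P' := by
  have key : ∀ {X X' Y Y' : List ℤ}, Descent 0 X → Descent 0 X' → PositivePath Y →
      X ++ Y = X' ++ Y' → ¬ X.length < X'.length := by
    intro X X' Y Y' hX hX' hY hXY hlt
    have hlen : X'.length ≤ X.length + Y.length := by
      have := congrArg List.length hXY
      simp only [List.length_append] at this
      omega
    have hpos := hY.2 (X'.length - X.length) (by omega) (by omega)
    have heq := congrArg (fun W => (W.take X'.length).sum) hXY
    simp only [List.sum_take_append, List.take_of_length_le hlt.le, hX.2.2, List.take_length,
      hX'.2.2, Nat.sub_self, List.take_zero, List.sum_nil] at heq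
    omega
  have hlen : E.length = E'.length := by
    by_contra hne
    rcases Nat.lt_or_gt_of_ne hne with hlt | hlt
    · exact key hE hE' hP h hlt
    · exact key hE' hE hP' h.symm hlt
  exact List.append_inj h hlen

def closeDown (W : List ℤ) : List ℤ := W ++ List.replicate W.sum.toNat (-1)

@[simp] lemma upContent_closeDown (W : List ℤ) : upContent (closeDown W) = upContent W := by
  simp [closeDown, upContent]

lemma NonnegPath.descent_closeDown {W : List ℤ} (h : NonnegPath W) : Descent 0 (closeDown W) := by
  have hsum := h.sum_nonneg
  refine ⟨isPath_append.mpr ⟨h.1, fun x hx => (List.eq_of_mem_replicate hx).ge⟩,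
    fun i => ?_, ?_⟩
  · have := h.2 i
    rw [closeDown, List.sum_take_append]
    rcases le_or_gt i W.length with hi | hi
    · simp [Nat.sub_eq_zero_of_le hi]; omega
    · simp [List.take_of_length_le hi.le]; omega
  · simp [closeDown]; omega

lemma Descent.exists_closeDown {W : List ℤ} (h : Descent 0 W) (hne : W ≠ []) :
    ∃ A s, NonnegPath A ∧ 0 ≤ s ∧ closeDown (A ++ [s]) = W := by
  have hup : ∃ s ∈ W.reverse, s ≠ -1 := by
    obtain ⟨s, B, rfl⟩ := List.exists_cons_of_ne_nil hne
    exact ⟨s, by simp, by have := (descent_zero_cons_iff.mp h).1; omega⟩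
  obtain ⟨k, s, C, hs, hrev⟩ := List.exists_eq_replicate_append_cons hup
  have hW : C.reverse ++ s :: List.replicate k (-1) = W := by
    rw [← List.reverse_reverse W, hrev]; simp
  have hs0 : 0 ≤ s := by
    have := h.1 s (hW ▸ by simp)
    omega
  have hsum : (C.reverse ++ [s]).sum = k := by
    have := h.2.2
    simp only [← hW, List.sum_append, List.sum_cons, List.sum_replicate, smul_neg,
      nsmul_eq_mul, mul_one] at this
    simp only [List.sum_append, List.sum_singleton]
    omega
  refine ⟨C.reverse, s, (hW ▸ h.nonnegPath).left_of_append, hs0, ?_⟩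
  simp [closeDown, hsum, ← hW]

lemma closeDown_append_singleton_inj {A A' : List ℤ} {s s' : ℤ} (hs : 0 ≤ s) (hs' : 0 ≤ s')
    (h : closeDown (A ++ [s]) = closeDown (A' ++ [s'])) : A = A' ∧ s = s' := by
  simp only [closeDown, List.append_assoc, List.singleton_append] at h
  replace h := congrArg List.reverse h
  simp only [List.reverse_append, List.reverse_cons, List.reverse_replicate, List.append_assoc,
    List.singleton_append] at h
  obtain ⟨-, rfl, hA⟩ := List.replicate_append_cons_inj (by omega) (by omega) h
  exact ⟨List.reverse_injective hA, rfl⟩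

/-! ### Generating series of classes of paths -/

def fiber (Q : List ℤ → Prop) (m : ℕ →₀ ℕ) : Set (List ℤ) :=
  {W | Q W ∧ upContent W = m}

def FiniteFibers (Q : List ℤ → Prop) : Prop := ∀ m, (fiber Q m).Finite

noncomputable def pathSeries (Q : List ℤ → Prop) : MvPowerSeries ℕ ℚ :=
  fun m => (fiber Q m).ncard

lemma coeff_pathSeries (Q : List ℤ → Prop) (m : ℕ →₀ ℕ) :
    coeff m (pathSeries Q) = (fiber Q m).ncard := rfl

lemma finiteFibers_of_neg_le_sum {Q : List ℤ → Prop} (n : ℤ)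
    (h : ∀ W, Q W → IsPath W ∧ -n ≤ W.sum) : FiniteFibers Q := fun m =>
  (finite_paths_of_neg_le_sum n m).subset fun W ⟨hQ, hW⟩ => ⟨(h W hQ).1, (h W hQ).2, hW⟩

lemma pathSeries_ne_zero {Q : List ℤ → Prop} (hQ : FiniteFibers Q) {W : List ℤ} (hW : Q W) :
    pathSeries Q ≠ 0 := fun h0 => by
  have := congrArg (coeff (upContent W)) h0
  rw [coeff_pathSeries, map_zero, Nat.cast_eq_zero, Set.ncard_eq_zero (hQ _)] at this
  exact this.subset ⟨hW, rfl⟩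

lemma pathSeries_nil : pathSeries (· = []) = 1 := by
  ext m
  have : fiber (· = []) m = {W | W = [] ∧ 0 = m} := by
    ext W
    simp only [fiber, Set.mem_ofPred_eq]
    constructor <;> rintro ⟨rfl, h⟩ <;> exact ⟨rfl, h⟩
  rw [coeff_pathSeries, coeff_one, this]
  split_ifs with hm
  · simp [hm]
  · simp [Ne.symm hm]

lemma pathSeries_eq_mul {Q₁ Q₂ Q : List ℤ → Prop} (f : List ℤ → List ℤ → List ℤ)
    (hf : Set.BijOn (fun p : List ℤ × List ℤ => f p.1 p.2) {p | Q₁ p.1 ∧ Q₂ p.2}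
      {W | Q W})
    (hcontent : ∀ A B, Q₁ A → Q₂ B → upContent (f A B) = upContent A + upContent B)
    (h₁ : FiniteFibers Q₁) (h₂ : FiniteFibers Q₂) :
    pathSeries Q = pathSeries Q₁ * pathSeries Q₂ := by
  ext m
  have hfiber : fiber Q m = ⋃ x ∈ Finset.HasAntidiagonal.antidiagonal m,
      (fun p : List ℤ × List ℤ => f p.1 p.2) '' (fiber Q₁ x.1 ×ˢ fiber Q₂ x.2) := by
    ext W
    simp only [fiber, Set.mem_iUnion, Set.mem_image, Set.mem_prod, Set.mem_ofPred_eq,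
      Finset.HasAntidiagonal.mem_antidiagonal, exists_prop, Prod.exists]
    constructor
    · rintro ⟨hW, rfl⟩
      obtain ⟨⟨A, B⟩, ⟨hA, hB⟩, rfl⟩ := hf.surjOn hW
      exact ⟨_, _, (hcontent A B hA hB).symm, A, B, ⟨⟨hA, rfl⟩, hB, rfl⟩, rfl⟩
    · rintro ⟨a, b, rfl, A, B, ⟨⟨hA, rfl⟩, hB, rfl⟩, rfl⟩
      exact ⟨hf.mapsTo (x := (A, B)) ⟨hA, hB⟩, hcontent A B hA hB⟩
  have hinj : ∀ x : (ℕ →₀ ℕ) × (ℕ →₀ ℕ),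
      Set.InjOn (fun p : List ℤ × List ℤ => f p.1 p.2) (fiber Q₁ x.1 ×ˢ fiber Q₂ x.2) :=
    fun x => hf.injOn.mono fun p hp => show Q₁ p.1 ∧ Q₂ p.2 from ⟨hp.1.1, hp.2.1⟩
  rw [coeff_mul, coeff_pathSeries, hfiber, ← Finset.set_biUnion_coe,
    Set.Finite.ncard_biUnion (Finset.finite_toSet _), finsum_mem_coe_finset, Nat.cast_sum]
  · refine Finset.sum_congr rfl fun x _ => ?_
    rw [(hinj x).ncard_image, Set.ncard_prod, Nat.cast_mul, coeff_pathSeries, coeff_pathSeries]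
  · exact fun x _ => ((h₁ _).prod (h₂ _)).image _
  · rintro x - y - hxy
    refine Set.disjoint_left.mpr ?_
    rintro _ ⟨p, hp, rfl⟩ ⟨q, hq, hpq⟩
    obtain rfl := hf.injOn ⟨hq.1.1, hq.2.1⟩ ⟨hp.1.1, hp.2.1⟩ hpq
    exact hxy (Prod.ext (hp.1.2.symm.trans hq.1.2) (hp.2.2.symm.trans hq.2.2))

instance : T2Space (MvPowerSeries ℕ ℚ) := inferInstanceAs (T2Space ((ℕ →₀ ℕ) → ℚ))

noncomputable def succSupport (m : ℕ →₀ ℕ) : Finset ℕ :=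
  m.support.preimage (· + 1) (add_left_injective 1).injOn

@[simp] lemma mem_succSupport {m : ℕ →₀ ℕ} {n : ℕ} :
    n ∈ succSupport m ↔ m (n + 1) ≠ 0 := by
  simp [succSupport]

lemma coeff_X_succ_mul (n : ℕ) (φ : MvPowerSeries ℕ ℚ) (m : ℕ →₀ ℕ) :
    coeff m (X (n + 1) * φ) =
      if n ∈ succSupport m then coeff (m - single (n + 1) 1) φ else 0 := by
  rw [X, coeff_monomial_mul, one_mul]
  simp [single_le_iff, Nat.one_le_iff_ne_zero]

lemma coeff_tsum_X_succ_mul (φ : ℕ → MvPowerSeries ℕ ℚ) (m : ℕ →₀ ℕ) :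
    coeff m (∑' n, X (n + 1) * φ n) =
      ∑ n ∈ succSupport m, coeff (m - single (n + 1) 1) (φ n) := by
  have hsum : HasSum (fun n => X (n + 1) * φ n) (α := MvPowerSeries ℕ ℚ)
      fun m => ∑ n ∈ succSupport m, coeff (m - single (n + 1) 1) (φ n) := by
    apply Pi.hasSum.mpr
    intro m
    have h : HasSum (fun n => coeff m (X (n + 1) * φ n))
        (∑ n ∈ succSupport m, coeff m (X (n + 1) * φ n)) :=
      hasSum_sum_of_ne_finset_zero fun n hn => by rw [coeff_X_succ_mul, if_neg hn]
    rwa [Finset.sum_congr rfl fun n hn => by rw [coeff_X_succ_mul, if_pos hn]] at h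
  rw [hsum.tsum_eq]
  rfl

/-- The coefficient of `t^m` on the right only involves coefficients of exponents strictly
below `m`. -/
lemma eq_of_lukasiewicz {A B : MvPowerSeries ℕ ℚ}
    (hA : A = 1 + ∑' n, X (n + 1) * A ^ (n + 1)) (hB : B = 1 + ∑' n, X (n + 1) * B ^ (n + 1)) :
    A = B := by
  ext m
  induction m using WellFoundedLT.induction with
  | _ m ih =>
    rw [hA, hB, map_add, map_add, coeff_tsum_X_succ_mul, coeff_tsum_X_succ_mul]
    refine congrArg _ (Finset.sum_congr rfl fun n hn => ?_)
    have hlt : m - single (n + 1) 1 < m := lt_of_le_of_ne tsub_le_self fun h => by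
      have := DFunLike.congr_fun h (n + 1)
      simp only [tsub_apply, single_eq_same] at this
      exact mem_succSupport.mp hn (by omega)
    exact coeff_pow_eq_of_coeff_eq (fun μ hμ => ih μ (hμ.trans_lt hlt)) _ _ le_rfl

def upCons (Q : ℕ → List ℤ → Prop) : List ℤ → Prop
  | [] => False
  | s :: B => 0 ≤ s ∧ Q s.toNat B

lemma pathSeries_upCons {Q : ℕ → List ℤ → Prop} (hQ : ∀ n, FiniteFibers (Q n)) :
    pathSeries (upCons Q) = ∑' n, X (n + 1) * pathSeries (Q n) := by
  ext m
  have hfiber : fiber (upCons Q) m =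
      ⋃ n ∈ succSupport m, ((n : ℤ) :: ·) '' fiber (Q n) (m - single (n + 1) 1) := by
    ext W
    simp only [fiber, Set.mem_iUnion, Set.mem_image, Set.mem_ofPred_eq, mem_succSupport]
    constructor
    · rintro ⟨hW, rfl⟩
      cases W with
      | nil => exact hW.elim
      | cons s B =>
        obtain ⟨hs, hB⟩ := hW
        refine ⟨s.toNat, ?_, B, ⟨hB, ?_⟩, by simp [hs]⟩ <;> simp [upContent_cons, hs]
    · rintro ⟨n, hn, B, ⟨hB, hBm⟩, rfl⟩
      refine ⟨⟨by simp, by simpa using hB⟩, ?_⟩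
      rw [upContent_cons, if_pos (by simp), hBm]
      simp only [Int.toNat_natCast]
      exact add_tsub_cancel_of_le (single_le_iff.mpr (Nat.one_le_iff_ne_zero.mpr hn))
  rw [coeff_tsum_X_succ_mul, coeff_pathSeries, hfiber, ← Finset.set_biUnion_coe,
    Set.Finite.ncard_biUnion (Finset.finite_toSet _), finsum_mem_coe_finset, Nat.cast_sum]
  · refine Finset.sum_congr rfl fun n _ => ?_
    rw [Set.ncard_image_of_injective _ List.cons_injective, coeff_pathSeries]
  · exact fun n _ => (hQ n _).image _
  · rintro n - n' - hnn'
    refine Set.disjoint_left.mpr ?_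
    rintro _ ⟨B, -, rfl⟩ ⟨B', -, h⟩
    exact hnn' (by simpa using (List.cons_eq_cons.mp h).1.symm)

lemma pathSeries_eq_one_add {Q : List ℤ → Prop} (hQ : FiniteFibers Q) (hnil : Q []) :
    pathSeries Q = 1 + pathSeries (fun W => Q W ∧ W ≠ []) := by
  ext m
  have hsplit : fiber Q m = fiber (· = []) m ∪ fiber (fun W => Q W ∧ W ≠ []) m := by
    ext W
    by_cases hW : W = [] <;> simp [fiber, hW, hnil]
  rw [map_add, ← pathSeries_nil, coeff_pathSeries, hsplit, Set.ncard_union_eq _ _ _, Nat.cast_add]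
  · rfl
  · exact Set.disjoint_left.mpr fun W h h' => h'.1.2 h.1
  · exact (hQ m).subset fun W ⟨hW, hc⟩ => ⟨hW ▸ hnil, hc⟩
  · exact (hQ m).subset fun W h => ⟨h.1.1, h.2⟩

/-! ### Excursions, nonnegative and positive paths -/

lemma finiteFibers_descent (n : ℕ) : FiniteFibers (Descent n) :=
  finiteFibers_of_neg_le_sum n fun _ h => ⟨h.1, h.2.2.ge⟩

lemma finiteFibers_nonnegPath : FiniteFibers NonnegPath :=
  finiteFibers_of_neg_le_sum 0 fun _ h => ⟨h.1, by simpa using h.sum_nonneg⟩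

lemma finiteFibers_positivePath : FiniteFibers PositivePath :=
  finiteFibers_of_neg_le_sum 0 fun _ h => ⟨h.1, by simpa using h.nonnegPath.sum_nonneg⟩

def UpStep (W : List ℤ) : Prop := ∃ s, 0 ≤ s ∧ W = [s]

lemma UpStep.nonnegPath {W : List ℤ} (h : UpStep W) : NonnegPath W := by
  obtain ⟨s, hs, rfl⟩ := h
  refine ⟨fun x hx => by simp at hx; omega, fun i => ?_⟩
  cases i <;> simp [hs]

lemma finiteFibers_upStep : FiniteFibers UpStep :=
  finiteFibers_of_neg_le_sum 0 fun _ h =>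
    ⟨h.nonnegPath.1, by simpa using h.nonnegPath.sum_nonneg⟩

lemma pathSeries_upStep : pathSeries UpStep = ∑' n, X (n + 1) := by
  have hnil : FiniteFibers (· = []) :=
    finiteFibers_of_neg_le_sum 0 fun _ h => h ▸ ⟨List.forall_mem_nil _, le_rfl⟩
  have hcons : UpStep = upCons fun _ => (· = []) := by
    funext W
    cases W <;> simp [UpStep, upCons, and_comm]
  simp [hcons, pathSeries_upCons fun _ => hnil, pathSeries_nil]

lemma pathSeries_descent_succ (n : ℕ) :
    pathSeries (Descent (n + 1)) = pathSeries (Descent 0) * pathSeries (Descent n) := by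
  refine pathSeries_eq_mul (fun A B => A ++ -1 :: B) ⟨?_, ?_, ?_⟩
    (fun A B _ _ => by simp [upContent_cons]) (finiteFibers_descent 0) (finiteFibers_descent n)
  · exact fun p hp => hp.1.append_down_append hp.2
  · rintro ⟨A, B⟩ hp ⟨A', B'⟩ hp' h
    obtain ⟨rfl, rfl⟩ := Descent.append_down_append_inj hp.1 hp'.1 h
    rfl
  · intro W hW
    obtain ⟨A, B, hA, hB, rfl⟩ := Descent.exists_append_down_append hW
    exact ⟨(A, B), ⟨hA, hB⟩, rfl⟩

lemma pathSeries_descent (n : ℕ) :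
    pathSeries (Descent n) = pathSeries (Descent 0) ^ (n + 1) := by
  induction n with
  | zero => rw [zero_add, pow_one]
  | succ n ih => rw [pathSeries_descent_succ, ih, pow_succ' _ (n + 1)]

lemma pathSeries_descent_zero :
    pathSeries (Descent 0) = 1 + ∑' n, X (n + 1) * pathSeries (Descent 0) ^ (n + 1) := by
  have hsplit : (fun W => Descent 0 W ∧ W ≠ []) = upCons Descent := by
    funext W
    cases W <;> simp [upCons, descent_zero_cons_iff]
  calc pathSeries (Descent 0) = 1 + pathSeries (upCons Descent) :=
        hsplit ▸ pathSeries_eq_one_add (finiteFibers_descent 0) descent_nil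
    _ = 1 + ∑' n, X (n + 1) * pathSeries (Descent n) := by
        rw [pathSeries_upCons finiteFibers_descent]
    _ = _ := congrArg (1 + ·) (tsum_congr fun n => by rw [pathSeries_descent n])

lemma pathSeries_nonnegPath :
    pathSeries NonnegPath = pathSeries (Descent 0) * pathSeries PositivePath := by
  refine pathSeries_eq_mul (· ++ ·) ⟨?_, ?_, ?_⟩ (fun A B _ _ => upContent_append A B)
    (finiteFibers_descent 0) finiteFibers_positivePath
  · exact fun p hp => hp.1.nonnegPath.append hp.2.nonnegPath
  · rintro ⟨E, P⟩ hp ⟨E', P'⟩ hp' h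
    obtain ⟨rfl, rfl⟩ := descent_append_positive_inj hp.1 hp'.1 hp.2 hp'.2 h
    rfl
  · intro W hW
    obtain ⟨E, P, hE, hP, rfl⟩ := NonnegPath.exists_descent_append_positive hW
    exact ⟨(E, P), ⟨hE, hP⟩, rfl⟩

lemma pathSeries_descent_zero_sub_one :
    pathSeries (Descent 0) - 1 = pathSeries NonnegPath * ∑' n, X (n + 1) := by
  rw [pathSeries_eq_one_add (finiteFibers_descent 0) descent_nil, add_sub_cancel_left,
    ← pathSeries_upStep]
  refine pathSeries_eq_mul (fun A B => closeDown (A ++ B)) ⟨?_, ?_, ?_⟩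
    (fun A B _ _ => by simp [upContent_closeDown]) finiteFibers_nonnegPath finiteFibers_upStep
  · rintro ⟨A, B⟩ ⟨hA, hB⟩
    obtain ⟨s, hs, rfl⟩ := hB
    refine ⟨(hA.append (UpStep.nonnegPath ⟨s, hs, rfl⟩)).descent_closeDown, ?_⟩
    simp [closeDown]
  · rintro ⟨A, B⟩ ⟨-, s, hs, rfl⟩ ⟨A', B'⟩ ⟨-, s', hs', rfl⟩ h
    obtain ⟨rfl, rfl⟩ := closeDown_append_singleton_inj hs hs' h
    rfl
  · rintro W ⟨hW, hne⟩
    obtain ⟨A, s, hA, hs, rfl⟩ := hW.exists_closeDown hne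
    exact ⟨(A, [s]), ⟨hA, s, hs, rfl⟩, rfl⟩

/-- (Theorem 5: `H` counts positive paths.) For every finitely supported exponent
function `m` (supported on the variables `t_i`, `i ≥ 1`), the set of positive paths
with up-step content `m` (and any number of down steps) is finite, and the coefficient of
`∏_{i ≥ 1} t_i ^ (m i)` in `H` is its cardinality. -/
theorem geode_stmt11 (S G H : MvPowerSeries ℕ ℚ)
    (hS : S = 1 + ∑' n : ℕ, (X (n + 1) : MvPowerSeries ℕ ℚ) * S ^ (n + 1))
    (hG : S - 1 = G * ∑' n : ℕ, (X (n + 1) : MvPowerSeries ℕ ℚ))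
    (hH : G = S * H) :
    ∀ m : ℕ →₀ ℕ, m 0 = 0 →
      {P : List ℤ | PositivePath P ∧ HasContent m P}.Finite ∧
        coeff m H = (Nat.card {P : List ℤ | PositivePath P ∧ HasContent m P} : ℚ) := by
  have hS' : S = pathSeries (Descent 0) := eq_of_lukasiewicz hS pathSeries_descent_zero
  have hG' : G = pathSeries NonnegPath := by
    refine mul_right_cancel₀ ?_ (hG.symm.trans (hS' ▸ pathSeries_descent_zero_sub_one))
    exact pathSeries_upStep ▸ pathSeries_ne_zero finiteFibers_upStep ⟨0, le_rfl, rfl⟩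
  have hH' : H = pathSeries PositivePath := by
    refine mul_left_cancel₀ (hS' ▸ pathSeries_ne_zero (finiteFibers_descent 0) descent_nil) ?_
    rw [← hH, hG', pathSeries_nonnegPath, hS']
  intro m hm
  have hfiber : {P | PositivePath P ∧ HasContent m P} = fiber PositivePath m :=
    Set.ext fun P => and_congr_right fun _ => hasContent_iff_upContent_eq hm P
  rw [hfiber, hH', coeff_pathSeries, Nat.card_coe_set_eq]
  exact ⟨finiteFibers_positivePath m, rfl⟩
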